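/- arXiv:1203.1273 — 5 statements merged into one kernel-verified Lean document; each statement's English description precedes it below -/
import Mathlib

section
/- Let p be a prime, b > 1 with p ∤ b, t ≥ 1, N = p^t, and let d > 1 divide ord_{p^t}(b) with k = ord_{p^t}(b)/d. Then d ∈ M_b(p^t) if and only if t ≤ ν_p(d) or p ∤ (b^k − 1); moreover p | b^k − 1 if and only if ord_p(b) | k. -/
/-- `d ∈ M_b(N)`: for every prime `r` dividing `gcd(b^{ord_N(b)/d} − 1, N)`,
`ν_r(N) ≤ ν_r(d)`. -/
def MidyProp (b N d : ℕ) : Prop :=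
  ∀ r : ℕ, r.Prime → r ∣ Nat.gcd (b ^ (orderOf (b : ZMod N) / d) - 1) N →
    padicValNat r N ≤ padicValNat r d

/-- for `N = p^t` and `d > 1` dividing `ord_{p^t}(b)` with
`k = ord_{p^t}(b)/d`, `d ∈ M_b(p^t)` iff `t ≤ ν_p(d)` or `p ∤ b^k − 1`;
moreover `p ∣ b^k − 1` iff `ord_p(b) ∣ k`. -/
theorem stmt13 (b p t d k : ℕ) (hb : 1 < b) (hp : p.Prime) (hpb : ¬ p ∣ b)
    (ht : 1 ≤ t) (hd : 1 < d) (hord : orderOf (b : ZMod (p ^ t)) = d * k) :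
    (MidyProp b (p ^ t) d ↔ (t ≤ padicValNat p d ∨ ¬ p ∣ b ^ k - 1)) ∧
    (p ∣ b ^ k - 1 ↔ orderOf (b : ZMod p) ∣ k) := by
  have hk : orderOf (b : ZMod (p ^ t)) / d = k := by
    rw [hord, Nat.mul_div_cancel_left _ (by omega : 0 < d)]
  have hbk : 1 ≤ b ^ k := Nat.one_le_pow _ _ (by omega)
  haveI : Fact p.Prime := ⟨hp⟩
  have hcast : ((b ^ k - 1 : ℕ) : ZMod p) = (b : ZMod p) ^ k - 1 := by
    push_cast [hbk]; ring
  have h2 : p ∣ b ^ k - 1 ↔ orderOf (b : ZMod p) ∣ k := by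
    rw [orderOf_dvd_iff_pow_eq_one, ← ZMod.natCast_eq_zero_iff _ p,
      hcast, sub_eq_zero]
  have hvt : padicValNat p (p ^ t) = t := by
    exact padicValNat.prime_pow t
  refine ⟨⟨fun h => ?_, fun h r hr hrdvd => ?_⟩, h2⟩
  · by_contra hcon
    push_neg at hcon
    obtain ⟨h1, h2'⟩ := hcon
    have := h p hp (Nat.dvd_gcd (by rwa [hk]) (dvd_pow_self p (by omega)))
    rw [hvt] at this
    omega
  · have hrp : r = p := by
      have : r ∣ p := hr.dvd_of_dvd_pow (hrdvd.trans (Nat.gcd_dvd_right _ _))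
      exact (Nat.prime_dvd_prime_iff_eq hr hp).mp this
    subst hrp
    have hpbk : r ∣ b ^ k - 1 := by
      have := hrdvd.trans (Nat.gcd_dvd_left _ _)
      rwa [hk] at this
    rw [hvt]
    rcases h with h | h
    · exact h
    · exact absurd hpbk h
end

section
/- Let P be a prime with gcd(P, b) = 1, b > 1, q a prime, and v ≥ 1 with q^v dividing ord_P(b). Then q^v ∈ M_b(P). In particular ord_P(b) divides P − 1, so P ≡ 1 (mod q^v). -/
/-- for a prime `P` coprime to `b` and `q^v ∣ ord_P(b)`, one has
`q^v ∈ M_b(P)`; moreover `ord_P(b) ∣ P − 1`, hence `P ≡ 1 (mod q^v)`. -/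
theorem stmt14 (b P q v : ℕ) (hb : 1 < b) (hP : P.Prime) (hco : Nat.Coprime P b)
    (hq : q.Prime) (hv : 1 ≤ v) (hdvd : q ^ v ∣ orderOf (b : ZMod P)) :
    MidyProp b P (q ^ v) ∧ orderOf (b : ZMod P) ∣ P - 1 ∧ P % q ^ v = 1 := by
  haveI : Fact P.Prime := ⟨hP⟩
  have hPb : ¬ P ∣ b := by
    intro h
    have : P ∣ Nat.gcd P b := Nat.dvd_gcd dvd_rfl h
    rw [hco] at this
    exact absurd (Nat.le_of_dvd one_pos this) (by have := hP.two_le; omega)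
  have hb0 : (b : ZMod P) ≠ 0 := by
    rw [Ne, ZMod.natCast_eq_zero_iff]
    exact hPb
  have hpow : (b : ZMod P) ^ (P - 1) = 1 := ZMod.pow_card_sub_one_eq_one hb0
  have hP1 : 0 < P - 1 := Nat.sub_pos_of_lt hP.one_lt
  have hord : orderOf (b : ZMod P) ∣ P - 1 := orderOf_dvd_of_pow_eq_one hpow
  have hepos : 0 < orderOf (b : ZMod P) := by
    have : IsOfFinOrder (b : ZMod P) :=
      isOfFinOrder_iff_pow_eq_one.mpr ⟨P - 1, hP1, hpow⟩
    exact this.orderOf_pos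
  have hqv1 : 1 < q ^ v := Nat.one_lt_pow (by omega) hq.one_lt
  set e := orderOf (b : ZMod P) with he
  refine ⟨?_, hord, ?_⟩
  · intro r hr hrdvd
    exfalso
    have hrP : r ∣ P := hrdvd.trans (Nat.gcd_dvd_right _ _)
    have hrb : r ∣ b ^ (e / q ^ v) - 1 := hrdvd.trans (Nat.gcd_dvd_left _ _)
    have hrP' : r = P := (Nat.prime_dvd_prime_iff_eq hr hP).mp hrP
    subst hrP'
    have hb1 : 1 ≤ b ^ (e / q ^ v) := Nat.one_le_pow _ _ (by omega)
    have : (b : ZMod r) ^ (e / q ^ v) = 1 := by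
      have := (ZMod.natCast_eq_zero_iff _ _).mpr hrb
      push_cast [Nat.cast_sub hb1] at this
      linear_combination this
    have hdd : e ∣ e / q ^ v := orderOf_dvd_of_pow_eq_one this
    have hlt : e / q ^ v < e := Nat.div_lt_self hepos hqv1
    have h0 : e / q ^ v = 0 := Nat.eq_zero_of_dvd_of_lt hdd hlt
    have hle : q ^ v ≤ e := Nat.le_of_dvd hepos hdvd
    have := Nat.div_pos hle (by omega)
    omega
  · obtain ⟨c, hc⟩ := hdvd.trans hord
    have hP2 : 2 ≤ P := hP.two_le
    have : P = 1 + q ^ v * c := by omega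
    rw [this, Nat.add_mul_mod_self_left, Nat.mod_eq_of_lt hqv1]
end

section
/- Let p₁, ..., p_t be distinct primes with d ∈ M_b(p_i) and ord_{p_i}(b) = d·k_i for each i, let h_i ≥ 1, N = p₁^{h₁}···p_t^{h_t}, m_i = ν_{p_i}(b^{ord_{p_i}(b)} − 1). Then ord_N(b) = d · lcm(p₁^{h₁−m₁}k₁, ..., p_t^{h_t−m_t}k_t), where any exponent h_i − m_i ≤ 0 is replaced by 0. -/
open scoped Function

theorem Finset.lcm_mul_left_of_nonempty {α β : Type*} [CommMonoidWithZero α]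
    [StrongNormalizedGCDMonoid α] {s : Finset β} (hs : s.Nonempty) (f : β → α) (a : α) :
    (s.lcm fun i ↦ a * f i) = normalize a * s.lcm f := by
  classical
  induction hs using Finset.Nonempty.cons_induction with
  | singleton i => rw [lcm_singleton, lcm_singleton, normalize_mul]
  | cons i s hi hs ih =>
    rw [cons_eq_insert, lcm_insert, lcm_insert, ih, ← lcm_mul_left]
    exact lcm_eq_of_associated_right ((normalize_associated a).mul_right _) _

theorem ZMod.natCast_eq_one_iff_dvd_sub_one {M x : ℕ} (hx : 1 ≤ x) :
    (x : ZMod M) = 1 ↔ M ∣ x - 1 := by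
  rw [← Nat.cast_one, ZMod.natCast_eq_natCast_iff, Nat.ModEq.comm, Nat.modEq_iff_dvd' hx]

theorem ZMod.orderOf_natCast_prod {ι : Type*} [Fintype ι] (b : ℕ) (a : ι → ℕ)
    (ha : Pairwise (Nat.Coprime on a)) :
    orderOf (b : ZMod (∏ i, a i)) = Finset.univ.lcm fun i ↦ orderOf (b : ZMod (a i)) := by
  rw [← MulEquiv.orderOf_eq (ZMod.prodEquivPi a ha).toMulEquiv, Pi.orderOf]
  simp

theorem Nat.Prime.odd_of_orderOf_natCast_ne_one {p b : ℕ} (hp : p.Prime) (hpb : ¬p ∣ b)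
    (hb : orderOf (b : ZMod p) ≠ 1) : Odd p := by
  refine hp.odd_of_ne_two ?_
  rintro rfl
  have : (b : ZMod 2) = 1 := ZMod.natCast_eq_one_iff_odd.2 (Nat.odd_iff.2 (by omega))
  exact hb (by rw [this, orderOf_one])

theorem padicValNat.pow_sub_one {p x : ℕ} [hp : Fact p.Prime] (hp1 : Odd p) (hx : 1 < x)
    (hpx : p ∣ x - 1) {s : ℕ} (hs : s ≠ 0) :
    padicValNat p (x ^ s - 1) = padicValNat p (x - 1) + padicValNat p s := by
  have hpx' : ¬p ∣ x := fun h ↦ hp.out.not_dvd_one <| by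
    simpa [Nat.sub_sub_self hx.le] using Nat.dvd_sub h hpx
  simpa using padicValNat.pow_sub_pow hp1 hx (by simpa using hpx) hpx' hs

theorem ZMod.orderOf_natCast_prime_pow {p b h : ℕ} [hp : Fact p.Prime] (hp1 : Odd p)
    (hb : 1 < b) (hpb : ¬p ∣ b) (hh : h ≠ 0) :
    orderOf (b : ZMod (p ^ h)) =
      p ^ (h - padicValNat p (b ^ orderOf (b : ZMod p) - 1)) * orderOf (b : ZMod p) := by
  set q := orderOf (b : ZMod p)
  set m := padicValNat p (b ^ q - 1)
  have hq : q ≠ 0 := ne_zero_of_dvd_ne_zero (by have := hp.out.two_le; omega)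
    (ZMod.orderOf_dvd_card_sub_one (by rwa [Ne, ZMod.natCast_eq_zero_iff]))
  have hbq : 1 < b ^ q := Nat.one_lt_pow hq hb
  have hpq : p ∣ b ^ q - 1 := by
    rw [← ZMod.natCast_eq_one_iff_dvd_sub_one hbq.le, Nat.cast_pow, pow_orderOf_eq_one]
  have pow_mul_eq_one_iff : ∀ s, (b : ZMod (p ^ h)) ^ (q * s) = 1 ↔ p ^ (h - m) ∣ s := by
    intro s
    rcases eq_or_ne s 0 with rfl | hs
    · simp
    have hbqs : 1 < b ^ (q * s) := Nat.one_lt_pow (mul_ne_zero hq hs) hb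
    rw [← Nat.cast_pow, ZMod.natCast_eq_one_iff_dvd_sub_one hbqs.le,
      padicValNat_dvd_iff_le (by omega), padicValNat_dvd_iff_le hs, pow_mul,
      padicValNat.pow_sub_one hp1 hbq hpq hs]
    omega
  have hq_dvd : q ∣ orderOf (b : ZMod (p ^ h)) := by
    simpa using
      orderOf_map_dvd (ZMod.castHom (dvd_pow_self p hh) (ZMod p)).toMonoidHom (b : ZMod (p ^ h))
  obtain ⟨s, hs⟩ := hq_dvd
  rw [mul_comm]
  refine Nat.dvd_antisymm (orderOf_dvd_of_pow_eq_one ((pow_mul_eq_one_iff _).2 dvd_rfl)) ?_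
  rw [hs]
  exact mul_dvd_mul_left q ((pow_mul_eq_one_iff s).1 (hs ▸ pow_orderOf_eq_one _))

theorem stmt16_general (b t : ℕ) (hb : 1 < b) (ht : 0 < t)
    (p h k : Fin t → ℕ) (d : ℕ) (hd : 1 < d)
    (hp : ∀ i, (p i).Prime) (hinj : Function.Injective p)
    (hpb : ∀ i, ¬ p i ∣ b) (hh : ∀ i, 1 ≤ h i)
    (hki : ∀ i, orderOf (b : ZMod (p i)) = d * k i) :
    orderOf (b : ZMod (∏ i, p i ^ h i)) =
      d * Finset.univ.lcm
        (fun i => p i ^ (h i - padicValNat (p i) (b ^ orderOf (b : ZMod (p i)) - 1)) * k i) := by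
  have hcop : Pairwise (Nat.Coprime on fun i ↦ p i ^ h i) := fun i j hij ↦
    ((Nat.coprime_primes (hp i) (hp j)).2 (hinj.ne hij)).pow _ _
  have hodd : ∀ i, Odd (p i) := fun i ↦ (hp i).odd_of_orderOf_natCast_ne_one (hpb i) <| by
    rw [hki i]
    exact fun h1 ↦ hd.ne' (Nat.eq_one_of_mul_eq_one_right h1)
  have hord : ∀ i, orderOf (b : ZMod (p i ^ h i)) =
      d * (p i ^ (h i - padicValNat (p i) (b ^ orderOf (b : ZMod (p i)) - 1)) * k i) := by
    intro i
    have := Fact.mk (hp i)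
    rw [ZMod.orderOf_natCast_prime_pow (hodd i) hb (hpb i) (by have := hh i; omega), hki i]
    ring
  have : Nonempty (Fin t) := ⟨⟨0, ht⟩⟩
  rw [ZMod.orderOf_natCast_prod b _ hcop, funext hord,
    Finset.lcm_mul_left_of_nonempty Finset.univ_nonempty, normalize_eq]

/-- with `d ∈ M_b(p_i)`, `ord_{p_i}(b) = d·k_i`,
`m_i = ν_{p_i}(b^{ord_{p_i}(b)} − 1)` and `N = ∏ p_i^{h_i}`,
`ord_N(b) = d · lcm_i (p_i^{h_i − m_i}·k_i)` (truncated subtraction). -/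
theorem stmt16 (b t : ℕ) (hb : 1 < b) (ht : 0 < t)
    (p h k : Fin t → ℕ) (d : ℕ) (hd : 1 < d)
    (hp : ∀ i, (p i).Prime) (hinj : Function.Injective p)
    (hpb : ∀ i, ¬ p i ∣ b) (hh : ∀ i, 1 ≤ h i)
    (hki : ∀ i, orderOf (b : ZMod (p i)) = d * k i)
    (hM : ∀ i, MidyProp b (p i) d) :
    orderOf (b : ZMod (∏ i, p i ^ h i)) =
      d * Finset.univ.lcm
        (fun i => p i ^ (h i - padicValNat (p i) (b ^ orderOf (b : ZMod (p i)) - 1)) * k i) :=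
  stmt16_general b t hb ht p h k d hd hp hinj hpb hh hki
end

section
/- Let p₁, ..., p_t be distinct primes with d ∈ M_b(p_i) for each i, h_i ≥ 1, N = p₁^{h₁}···p_t^{h_t}, ord_N(b) = d·k. Then d ∈ M_b(N) if and only if gcd(b^k − 1, N) = 1, and this is equivalent to: for each i, ord_{p_i}(b) does not divide k. -/
theorem dvd_pow_sub_one_iff_orderOf_dvd {b : ℕ} (hb : b ≠ 0) (n m : ℕ) :
    n ∣ b ^ m - 1 ↔ orderOf (b : ZMod n) ∣ m := by
  rw [orderOf_dvd_iff_pow_eq_one, ← ZMod.natCast_eq_zero_iff,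
    Nat.cast_sub (Nat.one_le_pow _ _ (Nat.pos_of_ne_zero hb)), sub_eq_zero]
  push_cast
  rfl

theorem Nat.Prime.not_dvd_of_dvd_orderOf {p b d : ℕ} (hp : p.Prime) (hpb : ¬ p ∣ b)
    (hd : 0 < d) (hdvd : d ∣ orderOf (b : ZMod p)) : ¬ p ∣ d := by
  have : Fact p.Prime := ⟨hp⟩
  have hb : (b : ZMod p) ≠ 0 := by rwa [Ne, ZMod.natCast_eq_zero_iff]
  have hdp : d ≤ p - 1 :=
    Nat.le_of_dvd (Nat.sub_pos_of_lt hp.one_lt) (hdvd.trans (ZMod.orderOf_dvd_card_sub_one hb))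
  intro hpd
  have := Nat.le_of_dvd hd hpd
  omega

theorem coprime_prod_prime_pow_iff {ι : Type*} [Fintype ι] {p h : ι → ℕ} (m : ℕ)
    (hp : ∀ i, (p i).Prime) (hh : ∀ i, 1 ≤ h i) :
    Nat.Coprime m (∏ i, p i ^ h i) ↔ ∀ i, ¬ p i ∣ m := by
  simp only [Nat.coprime_prod_right_iff, Finset.mem_univ, true_implies]
  refine forall_congr' fun i => ?_
  rw [Nat.coprime_pow_right_iff (hh i), Nat.coprime_comm, (hp i).coprime_iff_not_dvd]

theorem midyProp_iff_coprime {b N d : ℕ} (hN : N ≠ 0) (hdN : Nat.Coprime d N) :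
    MidyProp b N d ↔ Nat.Coprime (b ^ (orderOf (b : ZMod N) / d) - 1) N := by
  refine ⟨fun hM => Nat.coprime_of_dvd fun r hr hrm hrN => ?_,
    fun hcop r hr hrg => absurd (Nat.dvd_one.mp (hcop ▸ hrg)) hr.ne_one⟩
  have : Fact r.Prime := ⟨hr⟩
  have hrd : ¬ r ∣ d := fun hrd => hr.not_dvd_one (hdN ▸ Nat.dvd_gcd hrd hrN)
  have := hM r hr (Nat.dvd_gcd hrm hrN)
  rw [padicValNat.eq_zero_of_not_dvd hrd] at this
  have := one_le_padicValNat_of_dvd hN hrN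
  omega

theorem stmt17_general (b t : ℕ)
    (p h : Fin t → ℕ) (d k : ℕ) (hd : 1 < d)
    (hp : ∀ i, (p i).Prime)
    (hpb : ∀ i, ¬ p i ∣ b) (hh : ∀ i, 1 ≤ h i)
    (hdvd : ∀ i, d ∣ orderOf (b : ZMod (p i)))
    (hord : orderOf (b : ZMod (∏ i, p i ^ h i)) = d * k) :
    (MidyProp b (∏ i, p i ^ h i) d ↔ Nat.gcd (b ^ k - 1) (∏ i, p i ^ h i) = 1) ∧
    (Nat.gcd (b ^ k - 1) (∏ i, p i ^ h i) = 1 ↔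
      ∀ i, ¬ orderOf (b : ZMod (p i)) ∣ k) := by
  have hN : ∏ i, p i ^ h i ≠ 0 :=
    Finset.prod_ne_zero_iff.mpr fun i _ => pow_ne_zero _ (hp i).ne_zero
  have hdN : Nat.Coprime d (∏ i, p i ^ h i) := (coprime_prod_prime_pow_iff d hp hh).mpr
    fun i => (hp i).not_dvd_of_dvd_orderOf (hpb i) (by omega) (hdvd i)
  have hk : orderOf (b : ZMod (∏ i, p i ^ h i)) / d = k := by
    rw [hord, Nat.mul_div_cancel_left _ (by omega)]
  refine ⟨hk ▸ midyProp_iff_coprime hN hdN, ?_⟩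
  rw [← Nat.coprime_iff_gcd_eq_one, coprime_prod_prime_pow_iff _ hp hh]
  refine forall_congr' fun i => not_congr (dvd_pow_sub_one_iff_orderOf_dvd ?_ _ _)
  rintro rfl
  exact hpb i (dvd_zero _)

/-- with `d ∈ M_b(p_i)` for each `i`, `N = ∏ p_i^{h_i}` and
`ord_N(b) = d·k`, one has `d ∈ M_b(N) ↔ gcd(b^k − 1, N) = 1`, and this is equivalent to
`ord_{p_i}(b) ∤ k` for every `i`. -/
theorem stmt17 (b t : ℕ) (hb : 1 < b) (ht : 0 < t)
    (p h : Fin t → ℕ) (d k : ℕ) (hd : 1 < d)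
    (hp : ∀ i, (p i).Prime) (hinj : Function.Injective p)
    (hpb : ∀ i, ¬ p i ∣ b) (hh : ∀ i, 1 ≤ h i)
    (hdvd : ∀ i, d ∣ orderOf (b : ZMod (p i)))
    (hM : ∀ i, MidyProp b (p i) d)
    (hord : orderOf (b : ZMod (∏ i, p i ^ h i)) = d * k) :
    (MidyProp b (∏ i, p i ^ h i) d ↔ Nat.gcd (b ^ k - 1) (∏ i, p i ^ h i) = 1) ∧
    (Nat.gcd (b ^ k - 1) (∏ i, p i ^ h i) = 1 ↔
      ∀ i, ¬ orderOf (b : ZMod (p i)) ∣ k) :=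
  stmt17_general b t p h d k hd hp hpb hh hdvd hord
end

section
/- Let N > 1, b > 1 with gcd(N,b)=1, and suppose N is squarefree. Then every divisor d > 1 of ord_N(b) such that for each prime p | N with p | b^{ord_N(b)/d} − 1 one has p | d, satisfies d ∈ M_b(N); in particular if N is prime then every divisor d > 1 of ord_N(b) lies in M_b(N). -/
lemma sf_val_le_one {r N : ℕ} (hr : r.Prime) (hsf : Squarefree N) (hN : 0 < N) :
    padicValNat r N ≤ 1 := by
  have := Squarefree.natFactorization_le_one r hsf
  rwa [Nat.factorization_def N hr] at this

lemma one_le_val {r d : ℕ} (hr : r.Prime) (hd : 1 < d) (hdvd : r ∣ d) :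
    1 ≤ padicValNat r d := by
  haveI : Fact r.Prime := ⟨hr⟩
  exact one_le_padicValNat_of_dvd (by omega) hdvd

/-- for squarefree `N`, every divisor `d > 1` of `ord_N(b)` such that each
prime `p ∣ N` dividing `b^{ord_N(b)/d} − 1` also divides `p ∣ d` lies in `M_b(N)`; in
particular if `N` is prime then every divisor `d > 1` of `ord_N(b)` lies in `M_b(N)`. -/
theorem stmt19 (b N : ℕ) (hb : 1 < b) (hN : 1 < N) (hco : Nat.Coprime N b)
    (hsf : Squarefree N) :
    (∀ d, d ∣ orderOf (b : ZMod N) → 1 < d →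
      (∀ p, p.Prime → p ∣ N → p ∣ b ^ (orderOf (b : ZMod N) / d) - 1 → p ∣ d) →
      MidyProp b N d) ∧
    (N.Prime → ∀ d, d ∣ orderOf (b : ZMod N) → 1 < d → MidyProp b N d) := by
  have hmain : ∀ d, d ∣ orderOf (b : ZMod N) → 1 < d →
      (∀ p, p.Prime → p ∣ N → p ∣ b ^ (orderOf (b : ZMod N) / d) - 1 → p ∣ d) →
      MidyProp b N d := by
    intro d hdvd hd hp r hr hrg
    have hrN : r ∣ N := hrg.trans (Nat.gcd_dvd_right _ _)
    have hrb : r ∣ b ^ (orderOf (b : ZMod N) / d) - 1 :=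
      hrg.trans (Nat.gcd_dvd_left _ _)
    have hrd : r ∣ d := hp r hr hrN hrb
    calc padicValNat r N ≤ 1 := sf_val_le_one hr hsf (by omega)
      _ ≤ padicValNat r d := one_le_val hr hd hrd
  refine ⟨hmain, fun hNp d hdvd hd => ?_⟩
  apply hmain d hdvd hd
  intro p hp hpN hpb
  exfalso
  -- p = N since N prime
  have hpN' : p = N := (Nat.prime_dvd_prime_iff_eq hp hNp).mp hpN
  rw [hpN'] at hpb
  set o := orderOf (b : ZMod N) with ho
  have hopos : 0 < o := by
    haveI : NeZero N := ⟨by omega⟩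
    haveI : Fact (1 < N) := ⟨hN⟩
    have hu : ((ZMod.unitOfCoprime b hco.symm : (ZMod N)ˣ) : ZMod N) = (b : ZMod N) :=
      ZMod.coe_unitOfCoprime b hco.symm
    rw [ho, ← hu, orderOf_units]
    exact orderOf_pos _
  have hk1 : 1 ≤ o / d := Nat.one_le_div_iff (by omega) |>.mpr (Nat.le_of_dvd hopos hdvd)
  have hbk : 1 ≤ b ^ (o / d) := Nat.one_le_pow _ _ (by omega)
  have hmod : (b : ZMod N) ^ (o / d) = 1 := by
    have : (1 : ℕ) ≡ b ^ (o / d) [MOD N] := (Nat.modEq_iff_dvd' hbk).mpr hpb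
    have := (ZMod.natCast_eq_natCast_iff _ _ _).mpr this.symm
    push_cast at this
    exact this
  have hle : o ≤ o / d := Nat.le_of_dvd (by omega) (orderOf_dvd_of_pow_eq_one hmod)
  have hlt : o / d < o := Nat.div_lt_self hopos hd
  omega
end
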